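/- Let τ : A → B be a natural transformation of functors A, B : S → Set. Then τ is cartesian (all naturality squares at surjections of finite sets are pullbacks) if and only if τ̂ : Â → B̂ is cartesian (all naturality squares at arbitrary functions are pullbacks). -/
import Mathlib


/-- A functor from the skeleton `S` of finite sets and surjections to `Set`:
a family of sets with a functorial action of surjections. -/
structure SFunctor where
  obj : ℕ → Type
  map : ∀ {n m : ℕ} (f : Fin n → Fin m), Function.Surjective f → obj n → obj m
  map_id : ∀ {n : ℕ} (a : obj n), map id Function.surjective_id a = a
  map_map : ∀ {n m k : ℕ} (f : Fin n → Fin m) (hf : Function.Surjective f)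
      (g : Fin m → Fin k) (hg : Function.Surjective g) (a : obj n),
      map g hg (map f hf a) = map (g ∘ f) (hg.comp hf) a

/-- The relation identifying `(x⃗ ∘ σ, a)` with `(x⃗, σ · a)` for bijections `σ`,
on pairs of an injection `Fin n → X` and an element of `A(n)`. -/
def HatRel (A : SFunctor) (X : Type) :
    (Σ n : ℕ, {x : Fin n → X // Function.Injective x} × A.obj n) →
    (Σ n : ℕ, {x : Fin n → X // Function.Injective x} × A.obj n) → Prop :=
  fun p q => ∃ e : Fin p.1 ≃ Fin q.1,
    (∀ i, q.2.1.1 (e i) = p.2.1.1 i) ∧ A.map e e.surjective p.2.2 = q.2.2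

/-- `Â(X) = Σ_n [X over n] ⊗_{S_n} A(n)`. -/
def HatA (A : SFunctor) (X : Type) : Type := Quot (HatRel A X)

/-- The class `[x⃗, a]` in `Â(X)`. -/
def hatMk (A : SFunctor) {X : Type} {n : ℕ} (x : Fin n → X) (hx : Function.Injective x)
    (a : A.obj n) : HatA A X :=
  Quot.mk _ ⟨n, ⟨x, hx⟩, a⟩

/-- The characterizing property of the action of `Â` on functions:
`Â(f)([x⃗,a]) = [y⃗, A(α)(a)]` whenever `f ∘ x⃗ = y⃗ ∘ α` is an epi-mono factorization. -/
def HatMapSpec (A : SFunctor)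
    (F : ∀ (X Y : Type), (X → Y) → HatA A X → HatA A Y) : Prop :=
  ∀ (X Y : Type) (f : X → Y) (n m : ℕ) (x : Fin n → X) (hx : Function.Injective x)
    (a : A.obj n) (α : Fin n → Fin m) (hα : Function.Surjective α)
    (y : Fin m → Y) (hy : Function.Injective y),
    (∀ i, f (x i) = y (α i)) →
    F X Y f (hatMk A x hx a) = hatMk A y hy (A.map α hα a)

/-- A commutative square of sets which is a pullback (elementwise formulation). -/
def IsSetPullback {P A B C : Type} (pa : P → A) (pb : P → B) (f : A → C) (g : B → C) : Prop :=
  (∀ p, f (pa p) = g (pb p)) ∧ ∀ a b, f a = g b → ∃! p, pa p = a ∧ pb p = b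

/-- A commutative square of sets which is a weak pullback (elementwise formulation). -/
def IsWeakSetPullback {P A B C : Type} (pa : P → A) (pb : P → B) (f : A → C) (g : B → C) : Prop :=
  (∀ p, f (pa p) = g (pb p)) ∧ ∀ a b, f a = g b → ∃ p, pa p = a ∧ pb p = b

/-- Naturality of a family `τ n : A(n) → B(n)` with respect to surjections. -/
def SNatTrans (A B : SFunctor) (τ : ∀ n, A.obj n → B.obj n) : Prop :=
  ∀ (n m : ℕ) (f : Fin n → Fin m) (hf : Function.Surjective f) (a : A.obj n),
    τ m (A.map f hf a) = B.map f hf (τ n a)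

/-- The characterizing property of `τ̂ : Â → B̂`, namely `τ̂_X([x⃗,a]) = [x⃗, τ(a)]`. -/
def HatTransSpec (A B : SFunctor) (τ : ∀ n, A.obj n → B.obj n)
    (t : ∀ X : Type, HatA A X → HatA B X) : Prop :=
  ∀ (X : Type) (n : ℕ) (x : Fin n → X) (hx : Function.Injective x) (a : A.obj n),
    t X (hatMk A x hx a) = hatMk B x hx (τ n a)


lemma SFunctor.map_congr (A : SFunctor) {n m : ℕ} {f g : Fin n → Fin m}
    (hf : Function.Surjective f) (hg : Function.Surjective g) (a : A.obj n) (h : f = g) :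
    A.map f hf a = A.map g hg a := by subst h; rfl

lemma hatRel_equivalence (A : SFunctor) (X : Type) : Equivalence (HatRel A X) where
  refl p := ⟨Equiv.refl _, fun _ => rfl,
    (A.map_congr _ Function.surjective_id _ (funext fun _ => rfl)).trans (A.map_id _)⟩
  symm := by
    rintro p q ⟨e, he, ha⟩
    refine ⟨e.symm, fun i => ?_, ?_⟩
    · have := he (e.symm i); rw [e.apply_symm_apply] at this; exact this.symm
    · rw [← ha, A.map_map]
      exact (A.map_congr _ Function.surjective_id _
        (funext fun i => e.symm_apply_apply i)).trans (A.map_id _)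
  trans := by
    rintro p q r ⟨e₁, he₁, ha₁⟩ ⟨e₂, he₂, ha₂⟩
    refine ⟨e₁.trans e₂, fun i => ?_, ?_⟩
    · rw [Equiv.trans_apply, he₂, he₁]
    · rw [← ha₂, ← ha₁, A.map_map]
      exact A.map_congr _ _ _ (funext fun i => (Equiv.trans_apply _ _ _).symm)

lemma hat_exact (A : SFunctor) {X : Type} {p q} (h : Quot.mk (HatRel A X) p = Quot.mk _ q) :
    HatRel A X p q :=
  ((hatRel_equivalence A X).eqvGen_iff).mp (Quot.eqvGen_exact h)

lemma hatMk_inj (A : SFunctor) {X : Type} {n : ℕ} {x : Fin n → X} (hx : Function.Injective x)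
    {a a' : A.obj n} (h : hatMk A x hx a = hatMk A x hx a') : a = a' := by
  obtain ⟨e, he, ha⟩ := hat_exact A h
  have he' : ∀ i, x (e i) = x i := he
  have ha' : A.map ⇑e e.surjective a = a' := ha
  have hid : ⇑e = id := funext fun i => hx (he' i)
  rw [← ha', A.map_congr _ Function.surjective_id a hid, A.map_id]

lemma exists_factorization {X Y : Type} (f : X → Y) {n : ℕ} (x : Fin n → X) :
    ∃ (m : ℕ) (α : Fin n → Fin m) (_hα : Function.Surjective α) (y : Fin m → Y),
      Function.Injective y ∧ ∀ i, f (x i) = y (α i) := by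
  classical
  set g : Fin n → Y := fun i => f (x i) with hg
  haveI : Fintype (Set.range g) := Set.fintypeRange g
  let e : Fin (Fintype.card (Set.range g)) ≃ Set.range g := (Fintype.equivFin _).symm
  refine ⟨_, fun i => e.symm ⟨g i, ⟨i, rfl⟩⟩, ?_, fun j => (e j).1, ?_, fun i => ?_⟩
  · intro j
    obtain ⟨i, hi⟩ := (e j).2
    refine ⟨i, ?_⟩
    show e.symm ⟨g i, ⟨i, rfl⟩⟩ = j
    exact e.symm_apply_eq.mpr (Subtype.ext hi)
  · intro j₁ j₂ h
    exact e.injective (Subtype.ext h)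
  · show g i = (e (e.symm ⟨g i, ⟨i, rfl⟩⟩)).1
    rw [e.apply_symm_apply]

/-- A natural transformation `τ : A → B` of functors on `S` is
cartesian iff the induced transformation `τ̂ : Â → B̂` is cartesian. -/
theorem cartesian_iff_hat_cartesian (A B : SFunctor)
    (τ : ∀ n, A.obj n → B.obj n) (hτ : SNatTrans A B τ)
    (FA : ∀ (X Y : Type), (X → Y) → HatA A X → HatA A Y) (hFA : HatMapSpec A FA)
    (FB : ∀ (X Y : Type), (X → Y) → HatA B X → HatA B Y) (hFB : HatMapSpec B FB)
    (t : ∀ X : Type, HatA A X → HatA B X) (ht : HatTransSpec A B τ t) :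
    (∀ (n m : ℕ) (f : Fin n → Fin m) (hf : Function.Surjective f),
      IsSetPullback (τ n) (A.map f hf) (B.map f hf) (τ m)) ↔
    (∀ (X Y : Type) (f : X → Y),
      IsSetPullback (t X) (FA X Y f) (FB X Y f) (t Y)) := by
  constructor
  · -- τ cartesian ⇒ τ̂ cartesian
    intro H X Y f
    constructor
    · -- commutativity of the hat square
      intro p
      obtain ⟨⟨n, ⟨x, hx⟩, a⟩, rfl⟩ := Quot.exists_rep p
      obtain ⟨m, α, hα, y, hy, hfac⟩ := exists_factorization f x
      show FB X Y f (t X (hatMk A x hx a)) = t Y (FA X Y f (hatMk A x hx a))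
      rw [ht, hFB X Y f n m x hx (τ n a) α hα y hy hfac,
          hFA X Y f n m x hx a α hα y hy hfac, ht, hτ]
    · -- pullback property of the hat square
      intro q p' hqp'
      obtain ⟨⟨n, ⟨x, hx⟩, b⟩, rfl⟩ := Quot.exists_rep q
      obtain ⟨⟨m', ⟨y', hy'⟩, a'⟩, rfl⟩ := Quot.exists_rep p'
      obtain ⟨m, α, hα, y, hy, hfac⟩ := exists_factorization f x
      have hqp'' : hatMk B y hy (B.map α hα b) = hatMk B y' hy' (τ m' a') := by
        rw [← hFB X Y f n m x hx b α hα y hy hfac, ← ht]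
        exact hqp'
      obtain ⟨e, he, hc⟩ := hat_exact B hqp''
      have he' : ∀ i, y' (e i) = y i := he
      have hc2 : B.map ⇑e e.surjective (B.map α hα b) = τ m' a' := hc
      have hβb : B.map (⇑e ∘ α) (e.surjective.comp hα) b = τ m' a' :=
        (B.map_map α hα ⇑e e.surjective b).symm.trans hc2
      have hfac' : ∀ i, f (x i) = y' ((⇑e ∘ α) i) :=
        fun i => (hfac i).trans (he' (α i)).symm
      obtain ⟨a, ⟨ha1, ha2⟩, hauniq⟩ :=
        (H n m' (⇑e ∘ α) (e.surjective.comp hα)).2 b a' hβb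
      refine ⟨hatMk A x hx a, ⟨?_, ?_⟩, ?_⟩
      · show t X (hatMk A x hx a) = hatMk B x hx b
        rw [ht, ha1]
      · show FA X Y f (hatMk A x hx a) = hatMk A y' hy' a'
        rw [hFA X Y f n m' x hx a (⇑e ∘ α) (e.surjective.comp hα) y' hy' hfac', ha2]
      · rintro p ⟨hp1, hp2⟩
        obtain ⟨⟨k, ⟨z, hz⟩, c⟩, rfl⟩ := Quot.exists_rep p
        have hp1' : hatMk B z hz (τ k c) = hatMk B x hx b := by
          rw [← ht]; exact hp1
        obtain ⟨e₁, he₁, hc₁⟩ := hat_exact B hp1'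
        have he₁' : ∀ i, x (e₁ i) = z i := he₁
        have hc₁' : B.map ⇑e₁ e₁.surjective (τ k c) = b := hc₁
        have hzx : Quot.mk (HatRel A X) ⟨k, ⟨z, hz⟩, c⟩
            = hatMk A x hx (A.map ⇑e₁ e₁.surjective c) :=
          Quot.sound ⟨e₁, he₁', rfl⟩
        have hτc' : τ n (A.map ⇑e₁ e₁.surjective c) = b := by
          rw [hτ]; exact hc₁'
        have hp2' : hatMk A y' hy' (A.map (⇑e ∘ α) (e.surjective.comp hα)
              (A.map ⇑e₁ e₁.surjective c)) = hatMk A y' hy' a' := by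
          rw [← hFA X Y f n m' x hx _ (⇑e ∘ α) (e.surjective.comp hα) y' hy' hfac', ← hzx]
          exact hp2
        have hAc' : A.map (⇑e ∘ α) (e.surjective.comp hα) (A.map ⇑e₁ e₁.surjective c) = a' :=
          hatMk_inj A hy' hp2'
        rw [hzx, hauniq _ ⟨hτc', hAc'⟩]
  · -- τ̂ cartesian ⇒ τ cartesian
    intro H n m f hf
    constructor
    · intro a
      exact (hτ n m f hf a).symm
    · intro b a' hba'
      have hcomm : FB (Fin n) (Fin m) f (hatMk B id Function.injective_id b)
          = t (Fin m) (hatMk A id Function.injective_id a') := by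
        rw [hFB (Fin n) (Fin m) f n m id Function.injective_id b f hf id
            Function.injective_id (fun i => rfl), ht, hba']
      obtain ⟨p, ⟨hp1, hp2⟩, hup⟩ := (H (Fin n) (Fin m) f).2 _ _ hcomm
      obtain ⟨⟨k, ⟨z, hz⟩, c⟩, rfl⟩ := Quot.exists_rep p
      have hp1' : hatMk B z hz (τ k c) = hatMk B id Function.injective_id b := by
        rw [← ht]; exact hp1
      obtain ⟨e, he, hc⟩ := hat_exact B hp1'
      have he' : ∀ i, id (e i) = z i := he
      have hc' : B.map ⇑e e.surjective (τ k c) = b := hc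
      have hz' : Quot.mk (HatRel A (Fin n)) ⟨k, ⟨z, hz⟩, c⟩
          = hatMk A id Function.injective_id (A.map ⇑e e.surjective c) :=
        Quot.sound ⟨e, he', rfl⟩
      have hτa : τ n (A.map ⇑e e.surjective c) = b := by
        rw [hτ]; exact hc'
      have hp2' : hatMk A id Function.injective_id (A.map f hf (A.map ⇑e e.surjective c))
          = hatMk A id Function.injective_id a' := by
        rw [← hFA (Fin n) (Fin m) f n m id Function.injective_id _ f hf id
            Function.injective_id (fun i => rfl), ← hz']
        exact hp2
      have hAfe : A.map f hf (A.map ⇑e e.surjective c) = a' :=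
        hatMk_inj A Function.injective_id hp2'
      refine ⟨A.map ⇑e e.surjective c, ⟨hτa, hAfe⟩, ?_⟩
      rintro a₂ ⟨h1, h2⟩
      have k2 : hatMk A id Function.injective_id a₂
          = Quot.mk (HatRel A (Fin n)) ⟨k, ⟨z, hz⟩, c⟩ := by
        apply hup
        constructor
        · rw [ht, h1]
        · rw [hFA (Fin n) (Fin m) f n m id Function.injective_id a₂ f hf id
              Function.injective_id (fun i => rfl), h2]
      exact hatMk_inj A Function.injective_id (k2.trans hz')
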